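/- arXiv:2605.06697 — 8 statements merged into one kernel-verified Lean document; each statement's English description precedes it below -/
import Mathlib

section
/- If x and y are positive integers with x ≥ 3 satisfying x^2 - 343*y^2 = 2, then each of (x-2)^2, (x-1)^2, and x^2 - 2 is a powerful number. -/
/-!
The first two numbers are nonzero squares, and the equation says `x ^ 2 - 2 = 7 ^ 3 * y ^ 2`,
a product of two nonzero perfect powers with exponent at least 2; powerful numbers are closed
under multiplication.
-/

def Powerful (n : ℕ) : Prop :=
  0 < n ∧ ∀ p : ℕ, p.Prime → p ∣ n → p ^ 2 ∣ n

theorem Powerful.mul {a b : ℕ} (ha : Powerful a) (hb : Powerful b) : Powerful (a * b) := by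
  refine ⟨Nat.mul_pos ha.1 hb.1, fun p hp hdvd => ?_⟩
  rcases hp.dvd_mul.1 hdvd with hpa | hpb
  · exact (ha.2 p hp hpa).mul_right b
  · exact (hb.2 p hp hpb).mul_left a

theorem powerful_pow {n k : ℕ} (hn : 0 < n) (hk : 2 ≤ k) : Powerful (n ^ k) :=
  ⟨by positivity, fun _ hp hdvd =>
    (pow_dvd_pow_of_dvd (hp.dvd_of_dvd_pow hdvd) 2).trans (pow_dvd_pow n hk)⟩

theorem stmt_2 (x y : ℕ) (hx : 3 ≤ x) (hy : 0 < y)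
    (h : (x : ℤ) ^ 2 - 343 * (y : ℤ) ^ 2 = 2) :
    Powerful ((x - 2) ^ 2) ∧ Powerful ((x - 1) ^ 2) ∧ Powerful (x ^ 2 - 2) := by
  have hsq : x ^ 2 = 7 ^ 3 * y ^ 2 + 2 := by
    exact_mod_cast (by linarith : (x : ℤ) ^ 2 = 7 ^ 3 * y ^ 2 + 2)
  refine ⟨powerful_pow (by omega) le_rfl, powerful_pow (by omega) le_rfl, ?_⟩
  rw [hsq, Nat.add_sub_cancel]
  exact (powerful_pow (by norm_num) (by norm_num)).mul (powerful_pow hy le_rfl)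
end

section
/- There exist infinitely many positive integers N such that N, N + (2*sqrt(N) + 1), and N + 2*(2*sqrt(N) + 1) are all powerful, where N is a perfect square so that sqrt(N) is an integer. Equivalently: there are infinitely many x ≥ 3 such that (x-2)^2, (x-1)^2, and x^2 - 2 are all powerful. -/
section GeneralizedPell

variable {d c x y u w : ℕ}

theorem sq_eq_mul_sq_add_of_mul_pell_unit (hxy : x ^ 2 = d * y ^ 2 + c)
    (huw : u ^ 2 = d * w ^ 2 + 1) :
    (x * u + d * y * w) ^ 2 = d * (x * w + y * u) ^ 2 + c := by
  zify at hxy huw ⊢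
  linear_combination (↑u ^ 2 - ↑d * ↑w ^ 2 : ℤ) * hxy + (c : ℤ) * huw

theorem exists_gt_sq_eq_mul_sq_add (hxy : x ^ 2 = d * y ^ 2 + c) (hx : 0 < x)
    (huw : u ^ 2 = d * w ^ 2 + 1) (hu : 1 < u) (n : ℕ) :
    ∃ a b, n < a ∧ a ^ 2 = d * b ^ 2 + c := by
  induction n with
  | zero => exact ⟨x, y, hx, hxy⟩
  | succ n ih =>
    obtain ⟨a, b, hna, hab⟩ := ih
    refine ⟨a * u + d * b * w, a * w + b * u, ?_, sq_eq_mul_sq_add_of_mul_pell_unit hab huw⟩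
    have : a * 2 ≤ a * u := Nat.mul_le_mul_left a hu
    omega

end GeneralizedPell

theorem stmt_3 :
    {x : ℕ | 3 ≤ x ∧ Powerful ((x - 2) ^ 2) ∧ Powerful ((x - 1) ^ 2) ∧
      Powerful (x ^ 2 - 2)}.Infinite := by
  refine Set.infinite_of_forall_exists_gt fun n => ?_
  -- The unit `130576328 + 7050459 * √343` is `(11427 + 617 * √343) ^ 2 / 2`.
  obtain ⟨x, y, hnx, hxy⟩ := exists_gt_sq_eq_mul_sq_add (d := 343) (c := 2)
    (x := 11427) (y := 617) (u := 130576328) (w := 7050459)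
    (by norm_num) (by norm_num) (by norm_num) (by norm_num) n
  have hy : 0 < y := Nat.pos_of_ne_zero <| by
    rintro rfl
    have : x < 2 := by nlinarith
    interval_cases x <;> omega
  have hx : 3 ≤ x := by nlinarith
  refine ⟨x, ⟨hx, powerful_pow (by omega) le_rfl, powerful_pow (by omega) le_rfl, ?_⟩, hnx⟩
  rw [show x ^ 2 - 2 = 7 ^ 3 * y ^ 2 by omega]
  exact (powerful_pow (n := 7) (k := 3) (by norm_num) (by norm_num)).mul (powerful_pow hy le_rfl)
end

section
/- The generalized Pell equation x^2 - 343*y^2 = 2 has infinitely many solutions in positive integers (x, y). -/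
/-!
Multiplying `x + y√d` by a unit `a + b√d` of norm `1` preserves the norm `x² - d y²`. Since `d`
is not a square, Pell's equation has a solution with `a > 1`, and multiplication by it strictly
increases both coordinates of a positive solution. So the positive solutions of `x² - d y² = c`
have no maximal element, and are infinite as soon as there is one of them. For `d = 343`,
`c = 2` there is `(11427, 617)`.
-/

namespace Pell

/-- The coordinates of `(a + b√d) * (x + y√d)`. -/
def mulUnit (d a b : ℕ) (p : ℕ × ℕ) : ℕ × ℕ :=
  (a * p.1 + d * b * p.2, b * p.1 + a * p.2)

variable {d a b : ℕ}

lemma mulUnit_sq_sub (hab : (a : ℤ) ^ 2 - d * b ^ 2 = 1) (p : ℕ × ℕ) :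
    ((mulUnit d a b p).1 : ℤ) ^ 2 - d * ((mulUnit d a b p).2 : ℤ) ^ 2 =
      (p.1 : ℤ) ^ 2 - d * (p.2 : ℤ) ^ 2 := by
  simp only [mulUnit]
  push_cast
  linear_combination ((p.1 : ℤ) ^ 2 - d * (p.2 : ℤ) ^ 2) * hab

lemma lt_mulUnit (ha : 1 < a) {p : ℕ × ℕ} (hp₁ : 0 < p.1) (hp₂ : 0 < p.2) :
    p < mulUnit d a b p := by
  have h₁ : p.1 < a * p.1 := (Nat.lt_mul_iff_one_lt_left hp₁).mpr ha
  have h₂ : p.2 < a * p.2 := (Nat.lt_mul_iff_one_lt_left hp₂).mpr ha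
  exact Prod.mk_lt_mk_of_lt_of_le (by omega) (by omega)

theorem setOf_pos_sq_sub_mul_sq_eq_infinite {c : ℤ} (hd₀ : 0 < d) (hd : ¬IsSquare (d : ℤ))
    {x y : ℕ} (hx : 0 < x) (hy : 0 < y) (hxy : (x : ℤ) ^ 2 - d * (y : ℤ) ^ 2 = c) :
    {p : ℕ × ℕ | 0 < p.1 ∧ 0 < p.2 ∧ (p.1 : ℤ) ^ 2 - d * (p.2 : ℤ) ^ 2 = c}.Infinite := by
  obtain ⟨u, hux, huy⟩ := Solution₁.exists_pos_of_not_isSquare (by exact_mod_cast hd₀) hd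
  obtain ⟨a, ha⟩ := Int.eq_ofNat_of_zero_le (zero_le_one.trans hux.le)
  obtain ⟨b, hb⟩ := Int.eq_ofNat_of_zero_le huy.le
  have hab : (a : ℤ) ^ 2 - d * b ^ 2 = 1 := ha ▸ hb ▸ u.prop
  have ha₁ : 1 < a := by omega
  intro hfin
  obtain ⟨m, hm⟩ := hfin.exists_maximal ⟨(x, y), hx, hy, hxy⟩
  obtain ⟨hm₁, hm₂, hmc⟩ := hm.prop
  have hlt : m < mulUnit d a b m := lt_mulUnit ha₁ hm₁ hm₂
  have hmem : 0 < (mulUnit d a b m).1 ∧ 0 < (mulUnit d a b m).2 ∧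
      ((mulUnit d a b m).1 : ℤ) ^ 2 - d * ((mulUnit d a b m).2 : ℤ) ^ 2 = c :=
    ⟨hm₁.trans_le hlt.le.1, hm₂.trans_le hlt.le.2, (mulUnit_sq_sub hab m).trans hmc⟩
  exact hlt.not_ge (hm.le_of_ge hmem hlt.le)

end Pell

lemma not_isSquare_343 : ¬IsSquare (343 : ℤ) := by
  intro h
  have h₄ := h.map (Int.castRingHom (ZMod 4))
  revert h₄
  decide

theorem stmt_4 :
    {p : ℕ × ℕ | 0 < p.1 ∧ 0 < p.2 ∧
      (p.1 : ℤ) ^ 2 - 343 * (p.2 : ℤ) ^ 2 = 2}.Infinite := by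
  exact_mod_cast Pell.setOf_pos_sq_sub_mul_sq_eq_infinite (d := 343) (by norm_num)
    (by exact_mod_cast not_isSquare_343) (x := 11427) (y := 617) (by norm_num) (by norm_num)
    (by norm_num)
end

section
/- There are infinitely many three-term arithmetic progressions N, N+d, N+2d of powerful numbers with d = 2*Nat.sqrt(N) + 1 and N a perfect square. -/
theorem Powerful.mul_s5 {m n : ℕ} (hm : Powerful m) (hn : Powerful n) : Powerful (m * n) := by
  refine ⟨Nat.mul_pos hm.1 hn.1, fun p hp hpmn => ?_⟩
  rcases hp.dvd_mul.mp hpmn with hpm | hpn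
  · exact Dvd.dvd.mul_right (hm.2 p hp hpm) n
  · exact Dvd.dvd.mul_left (hn.2 p hp hpn) m

/-- Multiplication of `x + y √d` by the unit `u + v √d` of `ℤ[√d]` preserves the norm. -/
theorem sq_eq_mul_sq_add_mul_pell {d k x y u v : ℕ} (hxy : x ^ 2 = d * y ^ 2 + k)
    (huv : u ^ 2 = d * v ^ 2 + 1) :
    (u * x + d * v * y) ^ 2 = d * (v * x + u * y) ^ 2 + k := by
  zify at hxy huv ⊢
  linear_combination ((x : ℤ) ^ 2 - d * y ^ 2) * huv + hxy

theorem exists_lt_sq_eq_mul_sq_add {d k x₀ y₀ u v : ℕ} (hx₀ : 0 < x₀)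
    (hxy₀ : x₀ ^ 2 = d * y₀ ^ 2 + k) (hu : 1 < u) (huv : u ^ 2 = d * v ^ 2 + 1) (n : ℕ) :
    ∃ x y, n < x ∧ x ^ 2 = d * y ^ 2 + k := by
  induction n with
  | zero => exact ⟨x₀, y₀, hx₀, hxy₀⟩
  | succ n ih =>
    obtain ⟨x, y, hnx, hxy⟩ := ih
    refine ⟨u * x + d * v * y, v * x + u * y, ?_, sq_eq_mul_sq_add_mul_pell hxy huv⟩
    have : 2 * x ≤ u * x := Nat.mul_le_mul_right x hu
    omega

def PowerfulSquareProgression (N : ℕ) : Prop :=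
  (∃ s : ℕ, N = s ^ 2) ∧ Powerful N ∧ Powerful (N + (2 * Nat.sqrt N + 1)) ∧
    Powerful (N + 2 * (2 * Nat.sqrt N + 1))

theorem powerfulSquareProgression_sq {s : ℕ} (hs : 0 < s)
    (h : Powerful (s ^ 2 + 4 * s + 2)) : PowerfulSquareProgression (s ^ 2) := by
  refine ⟨⟨s, rfl⟩, powerful_pow hs le_rfl, ?_, ?_⟩ <;> rw [Nat.sqrt_eq']
  · rw [show s ^ 2 + (2 * s + 1) = (s + 1) ^ 2 by ring]
    exact powerful_pow s.succ_pos le_rfl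
  · rwa [show s ^ 2 + 2 * (2 * s + 1) = s ^ 2 + 4 * s + 2 by ring]

theorem stmt_5 :
    {N : ℕ | (∃ s : ℕ, N = s ^ 2) ∧ Powerful N ∧
      Powerful (N + (2 * Nat.sqrt N + 1)) ∧
      Powerful (N + 2 * (2 * Nat.sqrt N + 1))}.Infinite := by
  refine Set.infinite_of_forall_exists_gt fun n => ?_
  -- `11427 ^ 2 - 343 * 617 ^ 2 = 2`, and the unit is `(11427 + 617 √343) ^ 2 / 2`.
  obtain ⟨x, c, hnx, hxc⟩ := exists_lt_sq_eq_mul_sq_add (d := 7 ^ 3) (k := 2)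
    (x₀ := 11427) (y₀ := 617) (u := 130576328) (v := 7050459)
    (by norm_num) (by norm_num) (by norm_num) (by norm_num) (n + 2)
  obtain ⟨s, rfl⟩ : ∃ s, x = s + 2 := ⟨x - 2, by omega⟩
  have hc : 0 < c := Nat.pos_of_ne_zero fun hc => by subst hc; nlinarith
  have hsc : s ^ 2 + 4 * s + 2 = 7 ^ 3 * c ^ 2 := by linarith
  refine ⟨s ^ 2, powerfulSquareProgression_sq (by omega) ?_, ?_⟩
  · rw [hsc]
    exact (powerful_pow (by norm_num) (by norm_num)).mul_s5 (powerful_pow hc le_rfl)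
  · nlinarith
end

section
/- Define sequences by x_0 = 3, y_0 = 1, x_{k+1} = 8*x_k + 21*y_k, y_{k+1} = 3*x_k + 8*y_k. Then for every k with k ≡ 3 (mod 7), the pair (x_k, y_k/7) is a solution in positive integers to X^2 - 343*Y^2 = 2. -/
/-!
The step `(x, y) ↦ (8x + 21y, 3x + 8y)` is multiplication by `8 + 3√7`, a unit of norm `1` in
`ℤ[√7]`, so it preserves the norm `x² - 7y²`, which is `2` at `(3, 1)`. Modulo `7` the step fixes
`x` and adds `3x ≡ 2` to `y`, so `y_k ≡ 1 + 2k`, which vanishes for `k ≡ 3 (mod 7)`. For those `k`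
the norm equation `x_k² - 7y_k² = 2` reads `x_k² - 343 (y_k / 7)² = 2`.
-/

section
variable {x y : ℕ → ℤ}

theorem sq_sub_seven_mul_sq_eq_of_step (hx : ∀ k, x (k + 1) = 8 * x k + 21 * y k)
    (hy : ∀ k, y (k + 1) = 3 * x k + 8 * y k) (k : ℕ) :
    x k ^ 2 - 7 * y k ^ 2 = x 0 ^ 2 - 7 * y 0 ^ 2 := by
  induction k with
  | zero => rfl
  | succ k ih => rw [hx, hy, ← ih]; ring

theorem pos_of_step (hx : ∀ k, x (k + 1) = 8 * x k + 21 * y k)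
    (hy : ∀ k, y (k + 1) = 3 * x k + 8 * y k) (hx0 : 0 < x 0) (hy0 : 0 < y 0) (k : ℕ) :
    0 < x k ∧ 0 < y k := by
  induction k with
  | zero => exact ⟨hx0, hy0⟩
  | succ k ih => rw [hx, hy]; omega

theorem modEq_seven_x_zero_of_step (hx : ∀ k, x (k + 1) = 8 * x k + 21 * y k) (k : ℕ) :
    x k ≡ x 0 [ZMOD 7] := by
  induction k with
  | zero => rfl
  | succ k ih => rw [hx]; unfold Int.ModEq at *; omega

theorem modEq_seven_y_of_step (hx : ∀ k, x (k + 1) = 8 * x k + 21 * y k)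
    (hy : ∀ k, y (k + 1) = 3 * x k + 8 * y k) (k : ℕ) :
    y k ≡ y 0 + 3 * k * x 0 [ZMOD 7] := by
  induction k with
  | zero => simp
  | succ k ih =>
    obtain ⟨a, ha⟩ := (modEq_seven_x_zero_of_step hx k).symm.dvd
    obtain ⟨b, hb⟩ := ih.symm.dvd
    rw [hy]
    exact (Int.modEq_iff_dvd.mpr ⟨b + 3 * a + y k, by push_cast; linear_combination hb + 3 * ha⟩).symm

end

theorem stmt_9 (x y : ℕ → ℤ) (hx0 : x 0 = 3) (hy0 : y 0 = 1)
    (hx : ∀ k, x (k + 1) = 8 * x k + 21 * y k)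
    (hy : ∀ k, y (k + 1) = 3 * x k + 8 * y k) :
    ∀ k : ℕ, k % 7 = 3 →
      0 < x k ∧ 0 < y k / 7 ∧ (x k) ^ 2 - 343 * (y k / 7) ^ 2 = 2 := by
  intro k hk
  have hnorm : x k ^ 2 - 7 * y k ^ 2 = 2 := by
    rw [sq_sub_seven_mul_sq_eq_of_step hx hy, hx0, hy0]; norm_num
  obtain ⟨hxk, hyk⟩ := pos_of_step hx hy (by omega) (by omega) k
  have hdvd : 7 ∣ y k := by
    have hmod := modEq_seven_y_of_step hx hy k
    rw [hx0, hy0] at hmod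
    unfold Int.ModEq at hmod
    omega
  obtain ⟨m, hm⟩ := hdvd
  rw [hm, Int.mul_ediv_cancel_left _ (by norm_num)]
  rw [hm] at hnorm hyk
  exact ⟨hxk, by omega, by linear_combination hnorm⟩
end

section
/- Define the integer sequence x_0 = 11427, x_1 = 2984191388685, x_{k+2} = 261152656*x_{k+1} - x_k. Then the sequence (x_k) is strictly increasing; in particular the equation x^2 - 343*y^2 = 2 has infinitely many solutions in positive integers. -/
/-!
The pairs `(xₖ, yₖ)`, where `y` obeys the same recurrence as `x` from `y₀ = 617`,
`y₁ = 161131189369`, all solve `x² - 343 y² = 2`: a recurrence `vₖ₊₂ = c vₖ₊₁ - vₖ` on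
vectors preserves a quadratic form `Q` as soon as `Q(v₀) = Q(v₁) = N` and the polar form
satisfies `2 B(v₀, v₁) = c N`. Since `c ≥ 2`, both sequences increase, so these solutions
are positive and pairwise distinct.
-/

def SatisfiesRecurrence {R : Type*} [Ring R] (c : R) (a : ℕ → R) : Prop :=
  ∀ k, a (k + 2) = c * a (k + 1) - a k

def secondOrderSeq (c a₀ a₁ : ℤ) : ℕ → ℤ
  | 0 => a₀
  | 1 => a₁
  | k + 2 => c * secondOrderSeq c a₀ a₁ (k + 1) - secondOrderSeq c a₀ a₁ k

theorem secondOrderSeq_satisfiesRecurrence (c a₀ a₁ : ℤ) :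
    SatisfiesRecurrence c (secondOrderSeq c a₀ a₁) :=
  fun _ => rfl

namespace SatisfiesRecurrence

section Order

variable {R : Type*} [CommRing R] [LinearOrder R] [IsStrictOrderedRing R] {c : R} {a : ℕ → R}

theorem strictMono (h : SatisfiesRecurrence c a) (hc : 2 ≤ c) (h0 : 0 ≤ a 0)
    (h01 : a 0 < a 1) : StrictMono a := by
  have step : ∀ k, 0 ≤ a k ∧ a k < a (k + 1) := by
    intro k
    induction k with
    | zero => exact ⟨h0, h01⟩
    | succ k ih =>
      obtain ⟨hnonneg, hlt⟩ := ih
      have hnonneg' : 0 ≤ a (k + 1) := hnonneg.trans hlt.le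
      refine ⟨hnonneg', ?_⟩
      -- `aₖ₊₂ - aₖ₊₁ = (c - 2) aₖ₊₁ + (aₖ₊₁ - aₖ)`
      rw [h k]
      nlinarith [mul_nonneg (sub_nonneg.mpr hc) hnonneg']
  exact strictMono_nat_of_lt_succ fun k => (step k).2

theorem pos (h : SatisfiesRecurrence c a) (hc : 2 ≤ c) (h0 : 0 < a 0) (h01 : a 0 < a 1)
    (k : ℕ) : 0 < a k :=
  h0.trans_le ((h.strictMono hc h0.le h01).monotone k.zero_le)

end Order

theorem sq_sub_mul_sq_eq {R : Type*} [CommRing R] {c d N : R} {x y : ℕ → R}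
    (hx : SatisfiesRecurrence c x) (hy : SatisfiesRecurrence c y)
    (h0 : x 0 ^ 2 - d * y 0 ^ 2 = N) (h1 : x 1 ^ 2 - d * y 1 ^ 2 = N)
    (h01 : 2 * (x 0 * x 1 - d * (y 0 * y 1)) = c * N) (k : ℕ) :
    x k ^ 2 - d * y k ^ 2 = N := by
  have invariant : ∀ k, x k ^ 2 - d * y k ^ 2 = N ∧ x (k + 1) ^ 2 - d * y (k + 1) ^ 2 = N ∧
      2 * (x k * x (k + 1) - d * (y k * y (k + 1))) = c * N := by
    intro k
    induction k with
    | zero => exact ⟨h0, h1, h01⟩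
    | succ k ih =>
      obtain ⟨e0, e1, b⟩ := ih
      refine ⟨e1, ?_, ?_⟩
      · rw [hx k, hy k]
        linear_combination c ^ 2 * e1 - c * b + e0
      · rw [hx k, hy k]
        linear_combination 2 * c * e1 - b
  exact (invariant k).1

end SatisfiesRecurrence

theorem stmt_11 (x : ℕ → ℤ)
    (hx0 : x 0 = 11427) (hx1 : x 1 = 2984191388685)
    (hxr : ∀ k, x (k + 2) = 261152656 * x (k + 1) - x k) :
    StrictMono x ∧
    {p : ℤ × ℤ | 0 < p.1 ∧ 0 < p.2 ∧ p.1 ^ 2 - 343 * p.2 ^ 2 = 2}.Infinite := by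
  have hx : SatisfiesRecurrence 261152656 x := hxr
  set y := secondOrderSeq 261152656 617 161131189369
  have hy : SatisfiesRecurrence 261152656 y := secondOrderSeq_satisfiesRecurrence _ _ _
  have hy0 : y 0 = 617 := rfl
  have hy1 : y 1 = 161131189369 := rfl
  have hxmono : StrictMono x :=
    hx.strictMono (by norm_num) (by norm_num [hx0]) (by norm_num [hx0, hx1])
  have hxpos := hx.pos (by norm_num) (by norm_num [hx0]) (by norm_num [hx0, hx1])
  have hypos := hy.pos (by norm_num) (by norm_num [hy0]) (by norm_num [hy0, hy1])
  have hpell := hx.sq_sub_mul_sq_eq hy (d := 343) (N := 2) (by norm_num [hx0, hy0])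
    (by norm_num [hx1, hy1]) (by norm_num [hx0, hx1, hy0, hy1])
  refine ⟨hxmono, Set.infinite_of_injective_forall_mem (f := fun k => (x k, y k)) ?_ ?_⟩
  · exact fun a b hab => hxmono.injective (congrArg Prod.fst hab)
  · exact fun k => ⟨hxpos k, hypos k, hpell k⟩
end

section
/- For every integer x ≥ 3, the number of powerful integers a with (x-2)^2 < a < x^2 equals the number of squarefree positive integers m for which the fractional part of x/m^(3/2) is strictly less than 2/m^(3/2). -/
section aux

lemma fact_lm (l m : ℕ) (hl : l ≠ 0) (hm : m ≠ 0) (p : ℕ) :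
    (l ^ 2 * m ^ 3).factorization p = 2 * l.factorization p + 3 * m.factorization p := by
  rw [Nat.factorization_mul (pow_ne_zero _ hl) (pow_ne_zero _ hm),
    Nat.factorization_pow, Nat.factorization_pow]
  simp [mul_comm]

lemma fact_mod (l m : ℕ) (hl : l ≠ 0) (hm : Squarefree m) (p : ℕ) :
    m.factorization p = (l ^ 2 * m ^ 3).factorization p % 2 := by
  rw [fact_lm l m hl hm.ne_zero p]
  have h1 : m.factorization p ≤ 1 :=
    ((Nat.squarefree_iff_factorization_le_one hm.ne_zero).mp hm) p
  omega

lemma rep_unique {l₁ m₁ l₂ m₂ : ℕ} (hl₁ : l₁ ≠ 0) (hm₁ : Squarefree m₁)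
    (hl₂ : l₂ ≠ 0) (hm₂ : Squarefree m₂)
    (h : l₁ ^ 2 * m₁ ^ 3 = l₂ ^ 2 * m₂ ^ 3) : m₁ = m₂ := by
  refine Nat.eq_of_factorization_eq hm₁.ne_zero hm₂.ne_zero fun p => ?_
  rw [fact_mod l₁ m₁ hl₁ hm₁ p, fact_mod l₂ m₂ hl₂ hm₂ p, h]

lemma rep_exists {a : ℕ} (ha : Powerful a) :
    ∃ l m : ℕ, l ≠ 0 ∧ Squarefree m ∧ a = l ^ 2 * m ^ 3 := by
  obtain ⟨hpos, hpow⟩ := ha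
  have ha0 : a ≠ 0 := hpos.ne'
  set f := a.factorization with hf
  -- for each prime p dividing a, f p ≥ 2
  have hkey : ∀ p : ℕ, f p = 0 ∨ 2 ≤ f p := by
    intro p
    by_cases hp : p.Prime
    · by_cases hd : p ∣ a
      · right
        exact (Nat.Prime.pow_dvd_iff_le_factorization hp ha0).mp (hpow p hp hd)
      · left
        simp [hf, Nat.factorization_eq_zero_of_not_dvd hd]
    · left; simp [hf, Nat.factorization_eq_zero_of_not_prime _ hp]
  set l : ℕ := f.prod fun p k => p ^ ((k - 3 * (k % 2)) / 2) with hldef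
  set m : ℕ := f.prod fun p k => p ^ (k % 2) with hmdef
  have hprime : ∀ p ∈ f.support, p.Prime := fun p hp => Nat.prime_of_mem_primeFactors
    (by rwa [Nat.support_factorization] at hp)
  have hlfact : ∀ q : ℕ, l.factorization q = (f q - 3 * (f q % 2)) / 2 := by
    intro q
    rw [hldef, Finsupp.prod, Nat.factorization_prod
      (fun p hp => pow_ne_zero _ (hprime p hp).ne_zero)]
    rw [Finset.sum_apply']
    rw [Finset.sum_eq_single q (fun p hp hne => by
        rw [(hprime p hp).factorization_pow, Finsupp.single_apply, if_neg hne])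
      (fun hq => by simp [Finsupp.notMem_support_iff.mp hq])]
    by_cases hq : q ∈ f.support
    · rw [(hprime q hq).factorization_pow, Finsupp.single_apply, if_pos rfl]
    · simp [Finsupp.notMem_support_iff.mp hq]
  have hmfact : ∀ q : ℕ, m.factorization q = f q % 2 := by
    intro q
    rw [hmdef, Finsupp.prod, Nat.factorization_prod
      (fun p hp => pow_ne_zero _ (hprime p hp).ne_zero)]
    rw [Finset.sum_apply']
    rw [Finset.sum_eq_single q (fun p hp hne => by
        rw [(hprime p hp).factorization_pow, Finsupp.single_apply, if_neg hne])
      (fun hq => by simp [Finsupp.notMem_support_iff.mp hq])]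
    by_cases hq : q ∈ f.support
    · rw [(hprime q hq).factorization_pow, Finsupp.single_apply, if_pos rfl]
    · simp [Finsupp.notMem_support_iff.mp hq]
  have hl0 : l ≠ 0 := by
    rw [hldef, Finsupp.prod]
    exact Finset.prod_ne_zero_iff.mpr fun p hp => pow_ne_zero _ (hprime p hp).ne_zero
  have hm0 : m ≠ 0 := by
    rw [hmdef, Finsupp.prod]
    exact Finset.prod_ne_zero_iff.mpr fun p hp => pow_ne_zero _ (hprime p hp).ne_zero
  have hmsf : Squarefree m :=
    Nat.squarefree_of_factorization_le_one hm0 fun p => by rw [hmfact p]; omega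
  refine ⟨l, m, hl0, hmsf, ?_⟩
  refine Nat.eq_of_factorization_eq ha0 (by positivity) fun p => ?_
  rw [fact_lm l m hl0 hm0 p, hlfact p, hmfact p]
  simp only [← hf]
  rcases hkey p with h | h <;> omega

-- real side
lemma rpow_sq (m : ℕ) : ((m : ℝ) ^ ((3 : ℝ) / 2)) ^ 2 = ((m ^ 3 : ℕ) : ℝ) := by
  rw [← Real.rpow_natCast ((m : ℝ) ^ ((3 : ℝ) / 2)) 2, ← Real.rpow_mul (Nat.cast_nonneg m)]
  norm_num

lemma rpow_pos {m : ℕ} (hm : 0 < m) : 0 < (m : ℝ) ^ ((3 : ℝ) / 2) :=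
  Real.rpow_pos_of_pos (by exact_mod_cast hm) _

lemma mul_rpow_le_iff (l m k : ℕ) :
    (l : ℝ) * (m : ℝ) ^ ((3 : ℝ) / 2) ≤ (k : ℝ) ↔ l ^ 2 * m ^ 3 ≤ k ^ 2 := by
  have h0 : (0 : ℝ) ≤ (l : ℝ) * (m : ℝ) ^ ((3 : ℝ) / 2) :=
    mul_nonneg (Nat.cast_nonneg _) (Real.rpow_nonneg (Nat.cast_nonneg _) _)
  rw [← pow_le_pow_iff_left₀ h0 (Nat.cast_nonneg k) (two_ne_zero), mul_pow, rpow_sq]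
  exact_mod_cast Iff.rfl

lemma mul_rpow_lt_iff (l m k : ℕ) :
    (l : ℝ) * (m : ℝ) ^ ((3 : ℝ) / 2) < (k : ℝ) ↔ l ^ 2 * m ^ 3 < k ^ 2 := by
  have h0 : (0 : ℝ) ≤ (l : ℝ) * (m : ℝ) ^ ((3 : ℝ) / 2) :=
    mul_nonneg (Nat.cast_nonneg _) (Real.rpow_nonneg (Nat.cast_nonneg _) _)
  rw [← pow_lt_pow_iff_left₀ h0 (Nat.cast_nonneg k) (two_ne_zero), mul_pow, rpow_sq]
  exact_mod_cast Iff.rfl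

lemma lt_mul_rpow_iff (l m k : ℕ) :
    (k : ℝ) < (l : ℝ) * (m : ℝ) ^ ((3 : ℝ) / 2) ↔ k ^ 2 < l ^ 2 * m ^ 3 := by
  have h0 : (0 : ℝ) ≤ (l : ℝ) * (m : ℝ) ^ ((3 : ℝ) / 2) :=
    mul_nonneg (Nat.cast_nonneg _) (Real.rpow_nonneg (Nat.cast_nonneg _) _)
  rw [← pow_lt_pow_iff_left₀ (Nat.cast_nonneg k) h0 (two_ne_zero), mul_pow, rpow_sq]
  exact_mod_cast Iff.rfl

lemma fract_iff (x m : ℕ) (hm : 0 < m) :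
    Int.fract ((x : ℝ) / (m : ℝ) ^ ((3 : ℝ) / 2)) < 2 / (m : ℝ) ^ ((3 : ℝ) / 2) ↔
      (x : ℝ) - 2 < (⌊(x : ℝ) / (m : ℝ) ^ ((3 : ℝ) / 2)⌋₊ : ℝ) * (m : ℝ) ^ ((3 : ℝ) / 2) := by
  set t : ℝ := (m : ℝ) ^ ((3 : ℝ) / 2) with ht
  have htpos : 0 < t := rpow_pos hm
  have hξ : (0 : ℝ) ≤ (x : ℝ) / t := div_nonneg (Nat.cast_nonneg _) htpos.le
  have hL : (⌊(x : ℝ) / t⌋₊ : ℝ) = (⌊(x : ℝ) / t⌋ : ℤ) := natCast_floor_eq_intCast_floor hξ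
  rw [Int.fract, ← hL]
  have hxt : (x : ℝ) / t * t = x := div_mul_cancel₀ _ htpos.ne'
  have h2t : (2 : ℝ) / t * t = 2 := div_mul_cancel₀ _ htpos.ne'
  constructor <;> intro h <;> nlinarith [h, hxt, h2t, htpos]

lemma powerful_lm (l m : ℕ) (hl : 0 < l) (hm : 0 < m) : Powerful (l ^ 2 * m ^ 3) := by
  refine ⟨by positivity, fun p hp hd => ?_⟩
  rcases (Nat.Prime.dvd_mul hp).mp hd with h | h
  · exact Dvd.dvd.mul_right (pow_dvd_pow_of_dvd (hp.dvd_of_dvd_pow h) 2) _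
  · exact Dvd.dvd.mul_left
      (dvd_trans (pow_dvd_pow_of_dvd (hp.dvd_of_dvd_pow h) 2)
        (pow_dvd_pow m (by norm_num))) _
end aux

theorem stmt_14 (x : ℕ) (hx : 3 ≤ x) :
    {a : ℕ | Powerful a ∧ (x - 2) ^ 2 < a ∧ a < x ^ 2}.ncard =
    {m : ℕ | 0 < m ∧ Squarefree m ∧
      Int.fract ((x : ℝ) / (m : ℝ) ^ ((3 : ℝ) / 2)) < 2 / (m : ℝ) ^ ((3 : ℝ) / 2)}.ncard := by
  classical
  set M : Set ℕ := {m : ℕ | 0 < m ∧ Squarefree m ∧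
      Int.fract ((x : ℝ) / (m : ℝ) ^ ((3 : ℝ) / 2)) < 2 / (m : ℝ) ^ ((3 : ℝ) / 2)} with hM
  set A : Set ℕ := {a : ℕ | Powerful a ∧ (x - 2) ^ 2 < a ∧ a < x ^ 2} with hA
  set c : ℕ → ℕ := fun m =>
    if m = 1 then x - 1 else ⌊(x : ℝ) / (m : ℝ) ^ ((3 : ℝ) / 2)⌋₊ with hc
  set g : ℕ → ℕ := fun m => (c m) ^ 2 * m ^ 3 with hg
  have hxc : ((x - 2 : ℕ) : ℝ) = (x : ℝ) - 2 := by
    rw [Nat.cast_sub (by omega)]; norm_num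
  -- core facts for m ∈ M, m ≠ 1
  have hcore : ∀ m ∈ M, m ≠ 1 →
      c m ≠ 0 ∧ (x - 2) ^ 2 < (c m) ^ 2 * m ^ 3 ∧ (c m) ^ 2 * m ^ 3 < x ^ 2 := by
    intro m hm h1
    obtain ⟨hm0, hmsf, hfr⟩ := hm
    set t : ℝ := (m : ℝ) ^ ((3 : ℝ) / 2) with ht
    have htpos : 0 < t := rpow_pos hm0
    set L : ℕ := ⌊(x : ℝ) / t⌋₊ with hL
    have hcm : c m = L := by simp [hc, if_neg h1]; rfl
    have hlow : (x : ℝ) - 2 < (L : ℝ) * t := (fract_iff x m hm0).mp hfr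
    have hL0 : L ≠ 0 := by
      intro h0
      rw [h0] at hlow
      push_cast at hlow
      have : (3 : ℝ) ≤ (x : ℝ) := by exact_mod_cast hx
      linarith
    have hup : (L : ℝ) * t ≤ (x : ℝ) := by
      have := Nat.floor_le (div_nonneg (Nat.cast_nonneg x) htpos.le)
      calc (L : ℝ) * t ≤ ((x : ℝ) / t) * t := by
            exact mul_le_mul_of_nonneg_right this htpos.le
        _ = x := div_mul_cancel₀ _ htpos.ne'
    have hle : L ^ 2 * m ^ 3 ≤ x ^ 2 := (mul_rpow_le_iff L m x).mp hup
    have hltn : (x - 2) ^ 2 < L ^ 2 * m ^ 3 := by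
      rw [← lt_mul_rpow_iff]
      rw [hxc]
      exact hlow
    have hne : L ^ 2 * m ^ 3 ≠ x ^ 2 := by
      intro heq
      exact h1 (rep_unique hL0 hmsf (by omega : x ≠ 0) squarefree_one
        (by rw [heq]; ring))
    exact ⟨by rw [hcm]; exact hL0, by rw [hcm]; exact hltn, by rw [hcm]; omega⟩
  have hcne : ∀ m ∈ M, c m ≠ 0 := by
    intro m hm
    by_cases h1 : m = 1
    · simp [hc, h1]; omega
    · exact (hcore m hm h1).1
  have hbij : Set.BijOn g M A := by
    refine ⟨?_, ?_, ?_⟩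
    · -- MapsTo
      intro m hm
      obtain ⟨hm0, hmsf, hfr⟩ := hm
      by_cases h1 : m = 1
      · subst h1
        have hgx : g 1 = (x - 1) ^ 2 * 1 ^ 3 := by simp [hg, hc]
        refine ⟨?_, ?_, ?_⟩ <;> rw [hgx]
        · exact powerful_lm _ _ (by omega) one_pos
        · simp only [one_pow, mul_one]
          exact Nat.pow_lt_pow_left (by omega) (by norm_num)
        · simp only [one_pow, mul_one]
          exact Nat.pow_lt_pow_left (by omega) (by norm_num)
      · obtain ⟨hc0, hlo, hhi⟩ := hcore m ⟨hm0, hmsf, hfr⟩ h1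
        exact ⟨powerful_lm _ _ (Nat.pos_of_ne_zero hc0) hm0, hlo, hhi⟩
    · -- InjOn
      intro m₁ hm₁ m₂ hm₂ heq
      exact rep_unique (hcne m₁ hm₁) hm₁.2.1 (hcne m₂ hm₂) hm₂.2.1 heq
    · -- SurjOn
      intro a ha
      obtain ⟨hpa, hlow, hupp⟩ := ha
      obtain ⟨l, m, hl0, hmsf, rfl⟩ := rep_exists hpa
      have hm0 : 0 < m := Nat.pos_of_ne_zero hmsf.ne_zero
      by_cases h1 : m = 1
      · subst h1
        have hl : l = x - 1 := by
          simp only [one_pow, mul_one] at hlow hupp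
          have h2 : x - 2 < l := by
            by_contra hcon
            push_neg at hcon
            have := Nat.pow_le_pow_left hcon 2
            omega
          have h3 : l < x := by
            by_contra hcon
            push_neg at hcon
            have := Nat.pow_le_pow_left hcon 2
            omega
          omega
        refine ⟨1, ⟨one_pos, squarefree_one, ?_⟩, ?_⟩
        · push_cast
          rw [Real.one_rpow, div_one, div_one, Int.fract_natCast]
          norm_num
        · simp [hg, hc, hl]
      · set t : ℝ := (m : ℝ) ^ ((3 : ℝ) / 2) with ht
        have htpos : 0 < t := rpow_pos hm0
        have hlor : ((x - 2 : ℕ) : ℝ) < (l : ℝ) * t := (lt_mul_rpow_iff l m (x - 2)).mpr hlow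
        rw [hxc] at hlor
        have hupr : (l : ℝ) * t < (x : ℝ) := (mul_rpow_lt_iff l m x).mpr hupp
        have ht2 : (2 : ℝ) < t := by
          have hm2 : (8 : ℝ) ≤ ((m ^ 3 : ℕ) : ℝ) := by
            have : 8 ≤ m ^ 3 := by
              have : 2 ≤ m := by omega
              calc 8 = 2 ^ 3 := by norm_num
                _ ≤ m ^ 3 := Nat.pow_le_pow_left this 3
            exact_mod_cast this
          have hsq : t ^ 2 = ((m ^ 3 : ℕ) : ℝ) := rpow_sq m
          nlinarith
        have hfloor : ⌊(x : ℝ) / t⌋₊ = l := by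
          rw [Nat.floor_eq_iff (by positivity)]
          constructor
          · rw [le_div_iff₀ htpos]
            exact hupr.le
          · rw [div_lt_iff₀ htpos]
            push_cast
            nlinarith
        refine ⟨m, ⟨hm0, hmsf, ?_⟩, ?_⟩
        · rw [fract_iff x m hm0]
          rw [← ht, hfloor]
          exact hlor
        · simp only [hg, hc, if_neg h1, ← ht, hfloor]
  show A.ncard = M.ncard
  rw [← hbij.image_eq, Set.ncard_image_of_injOn hbij.injOn]
end

section
/- Suppose N, N+d, N+2d are consecutive elements of the sequence of powerful numbers (d ≥ 1), i.e., all three are powerful and no powerful number lies strictly between N and N+d or strictly between N+d and N+2d. If exactly two of N, N+d, N+2d are perfect squares, then there exists an integer x ≥ 3 with N = (x-2)^2, N+d = (x-1)^2, and N+2d = x^2 - 2. -/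
def NoPowerfulBetween (m n : ℕ) : Prop :=
  ∀ c : ℕ, Powerful c → ¬(m < c ∧ c < n)

theorem powerful_sq {k : ℕ} (hk : 0 < k) : Powerful (k ^ 2) :=
  ⟨by positivity, fun _ hp hdvd => pow_dvd_pow_of_dvd (hp.dvd_of_dvd_pow hdvd) 2⟩

theorem NoPowerfulBetween.eq_succ_of_sq {a b : ℕ} (h : NoPowerfulBetween (a ^ 2) (b ^ 2))
    (hab : a < b) : b = a + 1 := by
  by_contra hne
  exact h _ (powerful_sq (k := a + 1) (by omega))
    ⟨Nat.pow_lt_pow_left (lt_add_one a) two_ne_zero,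
      Nat.pow_lt_pow_left (by omega) two_ne_zero⟩

theorem NoPowerfulBetween.eq_of_lt_of_lt {m n k c : ℕ} (h₁ : NoPowerfulBetween m n)
    (h₂ : NoPowerfulBetween n k) (hc : Powerful c) (hmc : m < c) (hck : c < k) : c = n := by
  have := h₁ c hc
  have := h₂ c hc
  omega

section ConsecutivePowerful

variable {N d : ℕ}

theorem exists_eq_sq_of_isSquare_of_isSquare_add (hN : 0 < N) (hd : 1 ≤ d)
    (hgap : NoPowerfulBetween N (N + d)) (h₀ : IsSquare N) (h₁ : IsSquare (N + d)) :
    ∃ x : ℕ, 3 ≤ x ∧ N = (x - 2) ^ 2 ∧ N + d = (x - 1) ^ 2 ∧ N + 2 * d = x ^ 2 - 2 := by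
  obtain ⟨a, ha⟩ := (isSquare_iff_exists_sq N).1 h₀
  obtain ⟨b, hb⟩ := (isSquare_iff_exists_sq (N + d)).1 h₁
  have hab : a < b := lt_of_pow_lt_pow_left₀ 2 (Nat.zero_le b) (by omega)
  rw [hb, ha] at hgap
  obtain rfl := hgap.eq_succ_of_sq hab
  have ha₀ : a ≠ 0 := by rintro rfl; simp at ha; omega
  refine ⟨a + 2, by omega, by simpa using ha, by simpa using hb, ?_⟩
  have : (a + 1) ^ 2 = a ^ 2 + 2 * a + 1 := by ring
  have : (a + 2) ^ 2 = a ^ 2 + 4 * a + 4 := by ring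
  omega

theorem isSquare_add_of_isSquare_of_isSquare_add_two_mul (hd : 1 ≤ d)
    (hgap₁ : NoPowerfulBetween N (N + d)) (hgap₂ : NoPowerfulBetween (N + d) (N + 2 * d))
    (h₀ : IsSquare N) (h₂ : IsSquare (N + 2 * d)) : IsSquare (N + d) := by
  obtain ⟨a, ha⟩ := (isSquare_iff_exists_sq N).1 h₀
  obtain ⟨b, hb⟩ := (isSquare_iff_exists_sq (N + 2 * d)).1 h₂
  have hab : a < b := lt_of_pow_lt_pow_left₀ 2 (Nat.zero_le b) (by omega)
  rcases (show a + 1 ≤ b by omega).eq_or_lt with rfl | hab'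
  · have : (a + 1) ^ 2 = a ^ 2 + 2 * a + 1 := by ring
    omega
  · have hlt₁ : a ^ 2 < (a + 1) ^ 2 := Nat.pow_lt_pow_left (lt_add_one a) two_ne_zero
    have hlt₂ : (a + 1) ^ 2 < b ^ 2 := Nat.pow_lt_pow_left hab' two_ne_zero
    rw [← hgap₁.eq_of_lt_of_lt hgap₂ (powerful_sq (k := a + 1) (by omega)) (by omega) (by omega)]
    exact (isSquare_iff_exists_sq _).2 ⟨a + 1, rfl⟩

theorem not_isSquare_add_of_isSquare_add_two_mul (hN : 0 < N) (hd : 1 ≤ d)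
    (hgap₁ : NoPowerfulBetween N (N + d)) (hgap₂ : NoPowerfulBetween (N + d) (N + 2 * d))
    (h₂ : IsSquare (N + 2 * d)) : ¬IsSquare (N + d) := by
  intro h₁
  obtain ⟨a, ha⟩ := (isSquare_iff_exists_sq (N + d)).1 h₁
  obtain ⟨b, hb⟩ := (isSquare_iff_exists_sq (N + 2 * d)).1 h₂
  have hab : a < b := lt_of_pow_lt_pow_left₀ 2 (Nat.zero_le b) (by omega)
  rw [ha, hb] at hgap₂
  obtain rfl := hgap₂.eq_succ_of_sq hab
  have ha₀ : a ≠ 0 := by rintro rfl; simp at ha; omega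
  obtain ⟨c, rfl⟩ : ∃ c, a = c + 1 := ⟨a - 1, by omega⟩
  have : (c + 1) ^ 2 = c ^ 2 + 2 * c + 1 := by ring
  have : (c + 1 + 1) ^ 2 = c ^ 2 + 4 * c + 4 := by ring
  have hc : c ≠ 0 := by rintro rfl; simp at ha hb; omega
  exact hgap₁ (c ^ 2) (powerful_sq (Nat.pos_of_ne_zero hc)) ⟨by omega, by omega⟩

end ConsecutivePowerful

theorem stmt_18_general (N d : ℕ) (hd : 1 ≤ d)
    (hN : Powerful N)
    (hgap1 : ∀ a : ℕ, Powerful a → ¬(N < a ∧ a < N + d))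
    (hgap2 : ∀ a : ℕ, Powerful a → ¬(N + d < a ∧ a < N + 2 * d))
    (hsq : (IsSquare N ∧ IsSquare (N + d) ∧ ¬IsSquare (N + 2 * d)) ∨
           (IsSquare N ∧ ¬IsSquare (N + d) ∧ IsSquare (N + 2 * d)) ∨
           (¬IsSquare N ∧ IsSquare (N + d) ∧ IsSquare (N + 2 * d))) :
    ∃ x : ℕ, 3 ≤ x ∧ N = (x - 2) ^ 2 ∧ N + d = (x - 1) ^ 2 ∧ N + 2 * d = x ^ 2 - 2 := by
  rcases hsq with ⟨h₀, h₁, -⟩ | ⟨h₀, h₁, h₂⟩ | ⟨-, h₁, h₂⟩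
  · exact exists_eq_sq_of_isSquare_of_isSquare_add hN.1 hd hgap1 h₀ h₁
  · exact absurd (isSquare_add_of_isSquare_of_isSquare_add_two_mul hd hgap1 hgap2 h₀ h₂) h₁
  · exact absurd h₁ (not_isSquare_add_of_isSquare_add_two_mul hN.1 hd hgap1 hgap2 h₂)

theorem stmt_18 (N d : ℕ) (hd : 1 ≤ d)
    (hN : Powerful N) (hNd : Powerful (N + d)) (hN2d : Powerful (N + 2 * d))
    (hgap1 : ∀ a : ℕ, Powerful a → ¬(N < a ∧ a < N + d))
    (hgap2 : ∀ a : ℕ, Powerful a → ¬(N + d < a ∧ a < N + 2 * d))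
    (hsq : (IsSquare N ∧ IsSquare (N + d) ∧ ¬IsSquare (N + 2 * d)) ∨
           (IsSquare N ∧ ¬IsSquare (N + d) ∧ IsSquare (N + 2 * d)) ∨
           (¬IsSquare N ∧ IsSquare (N + d) ∧ IsSquare (N + 2 * d))) :
    ∃ x : ℕ, 3 ≤ x ∧ N = (x - 2) ^ 2 ∧ N + d = (x - 1) ^ 2 ∧ N + 2 * d = x ^ 2 - 2 :=
  stmt_18_general N d hd hN hgap1 hgap2 hsq
end
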